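/- arXiv:0707.4600 — 3 statements merged into one kernel-verified Lean document; each statement's English description precedes it below -/
import Mathlib

section
/- The invariant manifold M_ϑ = {ϑ_e^z : z ≥ 0} is a closed subset of M in the topology of weak convergence: if a sequence ϑ_e^{z_n} converges weakly to a finite measure ξ on ℍ₊, then ξ = ϑ_e^{z} for some z ≥ 0 (namely z = ξ(ℍ₊)). -/
open MeasureTheory Set Filter Topology
open scoped ENNReal NNReal BoundedContinuousFunction

noncomputable section

/-- The right half-plane `ℍ₊ = [0,∞) × ℝ`, as a subset of `ℝ × ℝ`. -/
def Hplus : Set (ℝ × ℝ) := {p | 0 ≤ p.1}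

/-- Translation of a set: `B + w = {b + w : b ∈ B}`. -/
def shiftSet (B : Set (ℝ × ℝ)) (w : ℝ × ℝ) : Set (ℝ × ℝ) := (fun b => b + w) '' B

/-- The "flow" map. -/
def psiMap (z : ℝ) : (ℝ × ℝ) × ℝ → ℝ × ℝ := fun q => (q.1.1 - q.2, q.1.2 - z * q.2)

lemma measurable_psiMap (z : ℝ) : Measurable (psiMap z) :=
  ((measurable_fst.comp measurable_fst).sub measurable_snd).prodMk
    ((measurable_snd.comp measurable_fst).sub (measurable_snd.const_mul z))

lemma shiftSet_eq (B : Set (ℝ × ℝ)) (w : ℝ × ℝ) :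
    shiftSet B w = (fun q => q - w) ⁻¹' B := by
  ext q
  constructor
  · rintro ⟨b, hb, rfl⟩; simpa using hb
  · intro hq; exact ⟨q - w, hq, by simp⟩

lemma measurableSet_Hplus : MeasurableSet Hplus :=
  measurableSet_le measurable_const measurable_fst

lemma psiMap_preimage_Hplus (z : ℝ) :
    psiMap z ⁻¹' Hplus = {q : (ℝ × ℝ) × ℝ | q.2 ≤ q.1.1} := by
  ext q; simp [psiMap, Hplus, sub_nonneg]

lemma subst_lintegral (z : ℝ) (hz : 0 < z) (h : ℝ → ℝ≥0∞) (hm : Measurable h) :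
    ∫⁻ u in Ioi (0 : ℝ), h u = ENNReal.ofReal z * ∫⁻ v in Ioi (0 : ℝ), h (z * v) := by
  have hzm : Measurable fun v : ℝ => z * v := measurable_const_mul z
  have hpre : (fun v : ℝ => z * v) ⁻¹' Ioi 0 = Ioi 0 := by
    ext v; simp [mul_pos_iff_of_pos_left, hz]
  have hmap : (volume.restrict (Ioi (0:ℝ))).map (fun v => z * v)
      = ENNReal.ofReal z⁻¹ • volume.restrict (Ioi (0:ℝ)) := by
    calc (volume.restrict (Ioi (0:ℝ))).map (fun v => z * v)
        = (volume.restrict ((fun v : ℝ => z * v) ⁻¹' Ioi 0)).map (fun v => z * v) := by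
          rw [hpre]
      _ = ((volume : Measure ℝ).map (fun v => z * v)).restrict (Ioi 0) :=
          (Measure.restrict_map hzm measurableSet_Ioi).symm
      _ = ENNReal.ofReal z⁻¹ • volume.restrict (Ioi (0:ℝ)) := by
          rw [Real.map_volume_mul_left hz.ne', Measure.restrict_smul,
            abs_of_pos (inv_pos.mpr hz)]
  have : ∫⁻ v in Ioi (0:ℝ), h (z * v)
      = ∫⁻ u, h u ∂((volume.restrict (Ioi (0:ℝ))).map (fun v => z * v)) :=
    (lintegral_map hm hzm).symm
  rw [this, hmap, lintegral_smul_measure, smul_eq_mul, ← mul_assoc, ← ENNReal.ofReal_mul hz.le,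
    mul_inv_cancel₀ hz.ne', ENNReal.ofReal_one, one_mul]

lemma measurableSet_S' : MeasurableSet {q : (ℝ × ℝ) × ℝ | q.2 ≤ q.1.1} :=
  measurableSet_le measurable_snd (measurable_fst.comp measurable_fst)

/-- The base measure `ϑ ⊗ Leb|_{(0,∞)}` restricted to `{v ≤ x}`. -/
def baseMeas (ϑ : Measure (ℝ × ℝ)) : Measure ((ℝ × ℝ) × ℝ) :=
  (ϑ.prod (volume.restrict (Ioi (0 : ℝ)))).restrict {q | q.2 ≤ q.1.1}

lemma base_univ (α : ℝ) (ϑ : Measure (ℝ × ℝ)) [IsProbabilityMeasure ϑ]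
    (hϑmean : ∫⁻ p, ENNReal.ofReal p.1 ∂ϑ = ENNReal.ofReal α⁻¹) :
    baseMeas ϑ univ = ENNReal.ofReal α⁻¹ := by
  rw [baseMeas, Measure.restrict_apply_univ, Measure.prod_apply measurableSet_S']
  have : ∀ p : ℝ × ℝ, (volume.restrict (Ioi (0:ℝ)))
      (Prod.mk p ⁻¹' {q : (ℝ × ℝ) × ℝ | q.2 ≤ q.1.1}) = ENNReal.ofReal p.1 := by
    intro p
    have h1 : (Prod.mk p ⁻¹' {q : (ℝ × ℝ) × ℝ | q.2 ≤ q.1.1}) = Iic p.1 := rfl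
    rw [h1, Measure.restrict_apply measurableSet_Iic, inter_comm, Ioi_inter_Iic,
      Real.volume_Ioc, sub_zero]
  simp_rw [this]
  exact hϑmean

lemma tau_rep (α : ℝ) (hα : 0 < α) (ϑ : Measure (ℝ × ℝ)) [IsProbabilityMeasure ϑ]
    (τ : ℝ → FiniteMeasure (ℝ × ℝ))
    (hτsupp : ∀ z : ℝ, 0 < z → (τ z : Measure (ℝ × ℝ)) {p : ℝ × ℝ | p.1 < 0} = 0)
    (hτ : ∀ z : ℝ, 0 < z → ∀ B : Set (ℝ × ℝ), MeasurableSet B → B ⊆ Hplus →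
      (τ z : Measure (ℝ × ℝ)) B
        = ENNReal.ofReal α * ∫⁻ u in Ioi (0 : ℝ), ϑ (shiftSet B (u / z, u)))
    (z : ℝ) (hz : 0 < z) :
    (τ z : Measure (ℝ × ℝ))
      = ENNReal.ofReal (α * z) • (baseMeas ϑ).map (psiMap z) := by
  ext B hB
  have hS : MeasurableSet (B ∩ Hplus) := hB.inter measurableSet_Hplus
  have hcompl : Hplusᶜ = {p : ℝ × ℝ | p.1 < 0} := by
    ext p; simp [Hplus, not_le]
  -- LHS decomposition
  have hsplit : (τ z : Measure (ℝ × ℝ)) B = (τ z : Measure (ℝ × ℝ)) (B ∩ Hplus) := by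
    have h1 := measure_inter_add_diff (μ := (τ z : Measure (ℝ × ℝ))) B measurableSet_Hplus
    have h2 : (τ z : Measure (ℝ × ℝ)) (B \ Hplus) = 0 := by
      apply measure_mono_null (t := Hplusᶜ) (diff_subset_compl B Hplus)
      rw [hcompl]; exact hτsupp z hz
    rw [← h1, h2, add_zero]
  -- the shifted-set formula
  have hshift : ∀ u : ℝ, shiftSet (B ∩ Hplus) (u / z, u)
      = {p : ℝ × ℝ | (p.1 - u / z, p.2 - u) ∈ B ∩ Hplus} := by
    intro u; rw [shiftSet_eq]; rfl
  set h : ℝ → ℝ≥0∞ := fun u => ϑ {p : ℝ × ℝ | (p.1 - u / z, p.2 - u) ∈ B ∩ Hplus} with hh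
  have hmeas_h : Measurable h := by
    have hT : MeasurableSet {q : (ℝ × ℝ) × ℝ | (q.1.1 - q.2 / z, q.1.2 - q.2) ∈ B ∩ Hplus} := by
      apply (((measurable_fst.comp measurable_fst).sub (measurable_snd.div_const z)).prodMk
        ((measurable_snd.comp measurable_fst).sub measurable_snd)) hS
    exact measurable_measure_prodMk_right (μ := ϑ) hT
  have hsub : ∀ v : ℝ, h (z * v) = ϑ {p : ℝ × ℝ | psiMap z (p, v) ∈ B ∩ Hplus} := by
    intro v
    have : (fun p : ℝ × ℝ => (p.1 - z * v / z, p.2 - z * v)) = fun p => psiMap z (p, v) := by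
      funext p; simp [psiMap, mul_div_cancel_left₀ _ hz.ne']
    simp only [hh]
    congr 1
    ext p
    rw [mem_setOf_eq, mem_setOf_eq, show (p.1 - z * v / z, p.2 - z * v) = psiMap z (p, v) from
      congrFun this p]
  have hswap : ∫⁻ v in Ioi (0:ℝ), ϑ {p : ℝ × ℝ | psiMap z (p, v) ∈ B ∩ Hplus}
      = (ϑ.prod (volume.restrict (Ioi (0:ℝ)))) (psiMap z ⁻¹' (B ∩ Hplus)) :=
    (Measure.prod_apply_symm (measurable_psiMap z hS)).symm
  have hLHS : (τ z : Measure (ℝ × ℝ)) B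
      = ENNReal.ofReal (α * z)
        * (ϑ.prod (volume.restrict (Ioi (0:ℝ)))) (psiMap z ⁻¹' (B ∩ Hplus)) := by
    rw [hsplit, hτ z hz _ hS inter_subset_right]
    simp_rw [hshift]
    rw [show (∫⁻ u in Ioi (0:ℝ), ϑ {p : ℝ × ℝ | (p.1 - u / z, p.2 - u) ∈ B ∩ Hplus})
        = ∫⁻ u in Ioi (0:ℝ), h u from rfl,
      subst_lintegral z hz h hmeas_h]
    simp_rw [hsub]
    rw [hswap, ← mul_assoc, ← ENNReal.ofReal_mul hα.le]
  rw [hLHS, Measure.smul_apply, smul_eq_mul,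
    Measure.map_apply (measurable_psiMap z) hB, baseMeas,
    Measure.restrict_apply (measurable_psiMap z hB)]
  congr 1
  rw [show {q : (ℝ × ℝ) × ℝ | q.2 ≤ q.1.1} = psiMap z ⁻¹' Hplus from (psiMap_preimage_Hplus z).symm,
    ← preimage_inter]

lemma tau_mass (α : ℝ) (hα : 0 < α) (ϑ : Measure (ℝ × ℝ)) [IsProbabilityMeasure ϑ]
    (hϑmean : ∫⁻ p, ENNReal.ofReal p.1 ∂ϑ = ENNReal.ofReal α⁻¹)
    (τ : ℝ → FiniteMeasure (ℝ × ℝ))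
    (hτsupp : ∀ z : ℝ, 0 < z → (τ z : Measure (ℝ × ℝ)) {p : ℝ × ℝ | p.1 < 0} = 0)
    (hτ : ∀ z : ℝ, 0 < z → ∀ B : Set (ℝ × ℝ), MeasurableSet B → B ⊆ Hplus →
      (τ z : Measure (ℝ × ℝ)) B
        = ENNReal.ofReal α * ∫⁻ u in Ioi (0 : ℝ), ϑ (shiftSet B (u / z, u)))
    (z : ℝ) (hz : 0 < z) :
    (τ z : Measure (ℝ × ℝ)) univ = ENNReal.ofReal z := by
  rw [tau_rep α hα ϑ τ hτsupp hτ z hz, Measure.smul_apply, smul_eq_mul,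
    Measure.map_apply (measurable_psiMap z) MeasurableSet.univ, preimage_univ,
    base_univ α ϑ hϑmean, ← ENNReal.ofReal_mul (by positivity)]
  congr 1
  rw [mul_comm α z, mul_assoc, mul_inv_cancel₀ hα.ne', mul_one]

/-- the invariant manifold `M_ϑ = {ϑ_e^z : z ≥ 0}` is closed under weak
convergence: if `ϑ_e^{z_n} → ξ` weakly, then `ξ = ϑ_e^{z}` with `z = ξ(ℍ₊)`. -/
theorem stmt_6 (α : ℝ) (hα : 0 < α) (ϑ : Measure (ℝ × ℝ)) [IsProbabilityMeasure ϑ]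
    (hϑsupp : ϑ {p : ℝ × ℝ | p.1 < 0} = 0)
    (hϑ0 : ϑ {p : ℝ × ℝ | p.1 = 0} = 0)
    (hϑmean : ∫⁻ p, ENNReal.ofReal p.1 ∂ϑ = ENNReal.ofReal α⁻¹)
    (τ : ℝ → FiniteMeasure (ℝ × ℝ))
    (hτ0 : (τ 0 : Measure (ℝ × ℝ)) = 0)
    (hτsupp : ∀ z : ℝ, 0 < z → (τ z : Measure (ℝ × ℝ)) {p : ℝ × ℝ | p.1 < 0} = 0)
    (hτ : ∀ z : ℝ, 0 < z → ∀ B : Set (ℝ × ℝ), MeasurableSet B → B ⊆ Hplus →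
      (τ z : Measure (ℝ × ℝ)) B
        = ENNReal.ofReal α * ∫⁻ u in Ioi (0 : ℝ), ϑ (shiftSet B (u / z, u))) :
    ∀ (zs : ℕ → ℝ), (∀ n, 0 ≤ zs n) → ∀ ξ : FiniteMeasure (ℝ × ℝ),
      Tendsto (fun n => τ (zs n)) atTop (𝓝 ξ) →
      ξ = τ (((ξ : Measure (ℝ × ℝ)) Hplus).toReal) := by
  intro zs hzs ξ hconv
  -- mass of τ z is z
  have hmassuniv : ∀ z : ℝ, 0 ≤ z → (τ z : Measure (ℝ × ℝ)) univ = ENNReal.ofReal z := by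
    intro z hz
    rcases hz.eq_or_lt with h | h
    · rw [← h, hτ0]; simp
    · exact tau_mass α hα ϑ hϑmean τ hτsupp hτ z h
  have hmass : ∀ n, ((τ (zs n)).mass : ℝ) = zs n := by
    intro n
    have h1 : ((τ (zs n)).mass : ℝ≥0∞) = ENNReal.ofReal (zs n) := by
      rw [FiniteMeasure.ennreal_mass, hmassuniv (zs n) (hzs n)]
    have h2 := congrArg ENNReal.toReal h1
    rwa [ENNReal.coe_toReal, ENNReal.toReal_ofReal (hzs n)] at h2
  -- convergence of zs to the mass of ξ
  have hzlim : Tendsto zs atTop (𝓝 (ξ.mass : ℝ)) := by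
    have := (NNReal.tendsto_coe.mpr hconv.mass :
      Tendsto (fun n => ((τ (zs n)).mass : ℝ)) atTop (𝓝 (ξ.mass : ℝ)))
    simpa only [hmass] using this
  set z : ℝ := (ξ.mass : ℝ) with hzdef
  have hz0 : 0 ≤ z := ξ.mass.2
  rcases hz0.eq_or_lt with hz | hz
  · -- degenerate case: ξ = 0
    have hξ0 : (ξ : Measure (ℝ × ℝ)) = 0 := by
      apply Measure.measure_univ_eq_zero.mp
      rw [← FiniteMeasure.ennreal_mass]
      have : ξ.mass = 0 := by
        apply NNReal.coe_injective; rw [← hzdef, ← hz]; rfl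
      rw [this]; rfl
    apply Subtype.ext
    show (ξ : Measure (ℝ × ℝ)) = (τ _ : Measure (ℝ × ℝ))
    rw [hξ0]
    have : ((0 : Measure (ℝ × ℝ)) Hplus).toReal = 0 := by simp
    rw [this, hτ0]
  · -- main case: z > 0
    have hrep := tau_rep α hα ϑ τ hτsupp hτ
    have hbase_fin : baseMeas ϑ univ ≠ ⊤ := by
      rw [base_univ α ϑ hϑmean]; exact ENNReal.ofReal_ne_top
    have hlint : ∀ w : ℝ, 0 < w → ∀ f : (ℝ × ℝ) →ᵇ ℝ≥0,
        ∫⁻ x, f x ∂(τ w : Measure (ℝ × ℝ))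
          = ENNReal.ofReal (α * w) * ∫⁻ q, f (psiMap w q) ∂(baseMeas ϑ) := by
      intro w hw f
      have hfm : Measurable fun x : ℝ × ℝ => (f x : ℝ≥0∞) :=
        measurable_coe_nnreal_ennreal.comp f.continuous.measurable
      rw [hrep w hw, lintegral_smul_measure, lintegral_map hfm (measurable_psiMap w), smul_eq_mul]
    have hτlim : Tendsto (fun n => τ (zs n)) atTop (𝓝 (τ z)) := by
      rw [FiniteMeasure.tendsto_iff_forall_lintegral_tendsto]
      intro f
      have hCb : ∀ x : ℝ × ℝ, (f x : ℝ≥0∞) ≤ ((nndist f 0 : ℝ≥0) : ℝ≥0∞) := fun x =>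
        ENNReal.coe_le_coe.mpr (BoundedContinuousFunction.NNReal.upper_bound f x)
      have hev : ∀ᶠ n in atTop, 0 < zs n := hzlim.eventually (eventually_gt_nhds hz)
      have hfin : Tendsto (fun n => ENNReal.ofReal (α * zs n)) atTop
          (𝓝 (ENNReal.ofReal (α * z))) :=
        (ENNReal.continuous_ofReal.tendsto _).comp (hzlim.const_mul α)
      have hint : Tendsto (fun n => ∫⁻ q, f (psiMap (zs n) q) ∂(baseMeas ϑ)) atTop
          (𝓝 (∫⁻ q, f (psiMap z q) ∂(baseMeas ϑ))) := by
        apply tendsto_lintegral_of_dominated_convergence (fun _ => ((nndist f 0 : ℝ≥0) : ℝ≥0∞))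
        · intro n
          exact measurable_coe_nnreal_ennreal.comp
            (f.continuous.measurable.comp (measurable_psiMap (zs n)))
        · intro n
          filter_upwards with q
          exact hCb (psiMap (zs n) q)
        · rw [lintegral_const]
          exact ENNReal.mul_ne_top ENNReal.coe_ne_top hbase_fin
        · filter_upwards with q
          have hψ : Tendsto (fun n => psiMap (zs n) q) atTop (𝓝 (psiMap z q)) := by
            apply Tendsto.prodMk_nhds tendsto_const_nhds
            exact tendsto_const_nhds.sub (hzlim.mul_const q.2)
          exact (ENNReal.continuous_coe.tendsto _).comp ((f.continuous.tendsto _).comp hψ)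
      have hmul : Tendsto (fun n => ENNReal.ofReal (α * zs n)
            * ∫⁻ q, f (psiMap (zs n) q) ∂(baseMeas ϑ)) atTop
          (𝓝 (ENNReal.ofReal (α * z) * ∫⁻ q, f (psiMap z q) ∂(baseMeas ϑ))) := by
        apply ENNReal.Tendsto.mul hfin ?_ hint (Or.inr ENNReal.ofReal_ne_top)
        right
        apply ne_of_lt
        calc ∫⁻ q, (f (psiMap z q) : ℝ≥0∞) ∂(baseMeas ϑ)
            ≤ ∫⁻ _, ((nndist f 0 : ℝ≥0) : ℝ≥0∞) ∂(baseMeas ϑ) :=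
              lintegral_mono fun q => hCb (psiMap z q)
          _ < ⊤ := by
              rw [lintegral_const]
              exact ENNReal.mul_lt_top ENNReal.coe_lt_top hbase_fin.lt_top
      rw [hlint z hz f]
      apply Tendsto.congr' _ hmul
      filter_upwards [hev] with n hn
      exact (hlint (zs n) hn f).symm
    have hξτ : ξ = τ z := by
      apply FiniteMeasure.ext_of_forall_lintegral_eq
      intro f
      exact tendsto_nhds_unique
        (FiniteMeasure.tendsto_iff_forall_lintegral_tendsto.mp hconv f)
        (FiniteMeasure.tendsto_iff_forall_lintegral_tendsto.mp hτlim f)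
    have hHp : (ξ : Measure (ℝ × ℝ)) Hplus = ENNReal.ofReal z := by
      rw [hξτ]
      have h1 := measure_add_measure_compl (μ := (τ z : Measure (ℝ × ℝ))) measurableSet_Hplus
      have hcompl : Hplusᶜ = {p : ℝ × ℝ | p.1 < 0} := by ext p; simp [Hplus, not_le]
      rw [hcompl, hτsupp z hz, add_zero, hmassuniv z hz0] at h1
      exact h1
    rw [hHp, ENNReal.toReal_ofReal hz0, ← hξτ]
end
end

section
/- Let c > 0 and suppose ϑ is the pushforward of ν under the map x ↦ (x, cx), where ν is a Borel probability measure on [0,∞) with ν({0}) = 0 and ∫ x dν(x) = 1/α. Then for every z > c and every y ∈ ℝ: ϑ_e^z([0,∞) × [y,∞)) = z + (c − z) ν_e([y (c − z)⁻¹, ∞)) if y ≤ 0, and ϑ_e^z([0,∞) × [y,∞)) = c ν_e([y c⁻¹, ∞)) if y > 0. -/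
/-! By the layer-cake formula, `ϑ_e^z([0,∞) × [y,∞)) = α ∫ (min(z x, c x - y))⁺ dν(x)` and
`ν_e([t,∞)) = α ∫ (x - t)⁺ dν(x)` for `t ≥ 0`. For `y > 0` the first integrand is `c (x - y/c)⁺`;
for `y ≤ 0` it is `z x - (z - c)(x - t)⁺` with `t = y/(c - z)`, and `α ∫ z x dν = z`. -/

open MeasureTheory Set Filter Topology

noncomputable section

/-- The excess lifetime distribution of `ν`: the measure on `ℝ` with Lebesgue density
`v ↦ α ν([v,∞))` on `[0,∞)` and `0` on `(-∞,0)`. -/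
def excessLife (α : ℝ) (ν : Measure ℝ) : Measure ℝ :=
  volume.withDensity fun v => if 0 ≤ v then ENNReal.ofReal α * ν (Ici v) else 0

theorem lintegral_ofReal_eq_lintegral_meas_le {Ω : Type*} [MeasurableSpace Ω] (μ : Measure Ω)
    {f : Ω → ℝ} (hf : AEMeasurable f μ) :
    ∫⁻ ω, ENNReal.ofReal (f ω) ∂μ = ∫⁻ t in Ioi 0, μ {ω | t ≤ f ω} := by
  have hpos_part : ∫⁻ ω, ENNReal.ofReal (f ω) ∂μ = ∫⁻ ω, ENNReal.ofReal (max (f ω) 0) ∂μ := by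
    congr with ω
    rw [ENNReal.ofReal_max, ENNReal.ofReal_zero, max_eq_left zero_le]
  rw [hpos_part, lintegral_eq_lintegral_meas_le (f := fun ω => max (f ω) 0) μ
    (.of_forall fun _ => le_max_right _ _) (hf.max aemeasurable_const)]
  refine setLIntegral_congr_fun measurableSet_Ioi fun t (ht : 0 < t) => ?_
  simp only [le_max_iff, not_le.mpr ht, or_false]

theorem excessLife_Ici (α : ℝ) (ν : Measure ℝ) {t : ℝ} (ht : 0 ≤ t) :
    excessLife α ν (Ici t) = ENNReal.ofReal α * ∫⁻ x, ENNReal.ofReal (x - t) ∂ν := by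
  have hmeas : Measurable fun v : ℝ => ν (Ici v) :=
    Antitone.measurable fun a b hab => measure_mono (Ici_subset_Ici.mpr hab)
  rw [excessLife, withDensity_apply _ measurableSet_Ici,
    setLIntegral_congr_fun measurableSet_Ici fun v (hv : t ≤ v) => if_pos (ht.trans hv),
    lintegral_const_mul _ hmeas, lintegral_ofReal_eq_lintegral_meas_le ν (by fun_prop)]
  congr 1
  have hpre : (fun u : ℝ => u + t) ⁻¹' Ici t = Ici 0 := by
    ext u; simp
  rw [← (measurePreserving_add_right volume t).setLIntegral_comp_preimage_emb
    (MeasurableEquiv.addRight t).measurableEmbedding, hpre, setLIntegral_congr Ioi_ae_eq_Ici.symm]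
  congr! 3 with u
  ext x
  simp [le_sub_iff_add_le]

theorem shiftSet_Ici_prod_Ici (a b : ℝ) (w : ℝ × ℝ) :
    shiftSet (Ici a ×ˢ Ici b) w = Ici (a + w.1) ×ˢ Ici (b + w.2) := by
  ext p
  constructor
  · rintro ⟨q, ⟨hq₁, hq₂⟩, rfl⟩
    exact ⟨by simpa using hq₁, by simpa using hq₂⟩
  · rintro ⟨hp₁, hp₂⟩
    exact ⟨p - w, ⟨by simpa [le_sub_iff_add_le] using hp₁, by simpa [le_sub_iff_add_le] using hp₂⟩,
      sub_add_cancel p w⟩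

theorem map_graph_mul_Ici_prod_Ici (ν : Measure ℝ) (c a b : ℝ) :
    ν.map (fun x => (x, c * x)) (Ici a ×ˢ Ici b) = ν {x | a ≤ x ∧ b ≤ c * x} := by
  rw [Measure.map_apply (by fun_prop) (measurableSet_Ici.prod measurableSet_Ici)]
  rfl

theorem measure_Ici_prod_Ici_eq_lintegral_min (α c : ℝ) (ν : Measure ℝ) {z : ℝ} (hz : 0 < z)
    (τ : Measure (ℝ × ℝ))
    (hτ : ∀ B : Set (ℝ × ℝ), MeasurableSet B → B ⊆ Hplus →
      τ B = ENNReal.ofReal α *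
        ∫⁻ u in Ioi (0 : ℝ), ν.map (fun x => (x, c * x)) (shiftSet B (u / z, u)))
    (y : ℝ) :
    τ (Ici 0 ×ˢ Ici y) = ENNReal.ofReal α * ∫⁻ x, ENNReal.ofReal (min (z * x) (c * x - y)) ∂ν := by
  rw [hτ _ (measurableSet_Ici.prod measurableSet_Ici) fun p hp => hp.1,
    lintegral_ofReal_eq_lintegral_meas_le ν (by fun_prop)]
  congr 1
  refine setLIntegral_congr_fun measurableSet_Ioi fun u _ => ?_
  rw [shiftSet_Ici_prod_Ici, map_graph_mul_Ici_prod_Ici]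
  congr 1
  ext x
  simp only [mem_ofPred_eq, le_min_iff, zero_add, div_le_iff₀ hz]
  constructor <;> rintro ⟨h₁, h₂⟩ <;> constructor <;> linarith

theorem ofReal_min_add_ofReal_mul_eq {c z y : ℝ} (hc : 0 ≤ c) (hcz : c < z) (hy : y ≤ 0) (x : ℝ) :
    ENNReal.ofReal (min (z * x) (c * x - y))
        + ENNReal.ofReal (z - c) * ENNReal.ofReal (x - y / (c - z)) = ENNReal.ofReal (z * x) := by
  have hcz' : c - z < 0 := sub_neg.mpr hcz
  set t := y / (c - z) with ht
  have hy_eq : y = (c - z) * t := by rw [ht, mul_div_cancel₀ _ hcz'.ne]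
  have ht_nonneg : 0 ≤ t := div_nonneg_of_nonpos hy hcz'.le
  rcases le_total x t with hxt | hxt
  · rw [ENNReal.ofReal_of_nonpos (sub_nonpos.mpr hxt), mul_zero, add_zero,
      min_eq_left (by nlinarith)]
  · rw [min_eq_right (by nlinarith), ← ENNReal.ofReal_mul (by linarith),
      ← ENNReal.ofReal_add (by nlinarith) (by nlinarith)]
    congr 1
    linear_combination -hy_eq

theorem ofReal_min_eq_ofReal_mul {c z y : ℝ} (hc : 0 < c) (hcz : c ≤ z) (hy : 0 ≤ y) (x : ℝ) :
    ENNReal.ofReal (min (z * x) (c * x - y)) = ENNReal.ofReal c * ENNReal.ofReal (x - y / c) := by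
  rw [← ENNReal.ofReal_mul hc.le, mul_sub, mul_div_cancel₀ _ hc.ne']
  rcases le_total 0 x with hx | hx
  · rw [min_eq_right (by nlinarith)]
  · rw [ENNReal.ofReal_of_nonpos (min_le_of_right_le (by nlinarith)),
      ENNReal.ofReal_of_nonpos (by nlinarith)]

theorem lintegral_min_add_excessLife_Ici {α c z : ℝ} (hα : 0 < α) (hc : 0 ≤ c) (hcz : c < z)
    {ν : Measure ℝ} (hνmean : ∫⁻ x, ENNReal.ofReal x ∂ν = ENNReal.ofReal α⁻¹) {y : ℝ} (hy : y ≤ 0) :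
    ENNReal.ofReal α * ∫⁻ x, ENNReal.ofReal (min (z * x) (c * x - y)) ∂ν
      + ENNReal.ofReal (z - c) * excessLife α ν (Ici (y / (c - z))) = ENNReal.ofReal z := by
  rw [excessLife_Ici α ν (div_nonneg_of_nonpos hy (sub_nonpos.mpr hcz.le))]
  calc _ = ENNReal.ofReal α * ∫⁻ x, (ENNReal.ofReal (min (z * x) (c * x - y))
          + ENNReal.ofReal (z - c) * ENNReal.ofReal (x - y / (c - z))) ∂ν := by
        rw [lintegral_add_left (by fun_prop), lintegral_const_mul _ (by fun_prop)]
        ring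
    _ = ENNReal.ofReal z * (ENNReal.ofReal α * ∫⁻ x, ENNReal.ofReal x ∂ν) := by
        simp_rw [ofReal_min_add_ofReal_mul_eq hc hcz hy, ENNReal.ofReal_mul (hc.trans_lt hcz).le]
        rw [lintegral_const_mul _ (by fun_prop)]
        ring
    _ = ENNReal.ofReal z := by
        rw [hνmean, ← ENNReal.ofReal_mul hα.le, mul_inv_cancel₀ hα.ne', ENNReal.ofReal_one,
          mul_one]

theorem lintegral_min_eq_excessLife_Ici (α : ℝ) {c z : ℝ} (hc : 0 < c) (hcz : c ≤ z)
    (ν : Measure ℝ) {y : ℝ} (hy : 0 ≤ y) :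
    ENNReal.ofReal α * ∫⁻ x, ENNReal.ofReal (min (z * x) (c * x - y)) ∂ν
      = ENNReal.ofReal c * excessLife α ν (Ici (y / c)) := by
  simp_rw [excessLife_Ici α ν (div_nonneg hy hc.le), ofReal_min_eq_ofReal_mul hc hcz hy]
  rw [lintegral_const_mul _ (by fun_prop)]
  ring

theorem stmt_14_general (α : ℝ) (hα : 0 < α) (c : ℝ) (hc : 0 < c)
    (ν : Measure ℝ)
    (hνmean : ∫⁻ x, ENNReal.ofReal x ∂ν = ENNReal.ofReal α⁻¹)
    (ϑ : Measure (ℝ × ℝ)) (hϑ : ϑ = ν.map (fun x : ℝ => (x, c * x)))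
    (z : ℝ) (hcz : c < z) (τ : Measure (ℝ × ℝ))
    (hτ : ∀ B : Set (ℝ × ℝ), MeasurableSet B → B ⊆ Hplus →
      τ B = ENNReal.ofReal α * ∫⁻ u in Ioi (0 : ℝ), ϑ (shiftSet B (u / z, u))) :
    ∀ y : ℝ,
      (y ≤ 0 → (τ (Ici (0 : ℝ) ×ˢ Ici y)).toReal
          = z + (c - z) * (excessLife α ν (Ici (y / (c - z)))).toReal) ∧
      (0 < y → (τ (Ici (0 : ℝ) ×ˢ Ici y)).toReal
          = c * (excessLife α ν (Ici (y / c))).toReal) := by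
  intro y
  subst hϑ
  have hτB := measure_Ici_prod_Ici_eq_lintegral_min α c ν (hc.trans hcz) τ hτ y
  refine ⟨fun hy => ?_, fun hy => ?_⟩
  · have hsum := lintegral_min_add_excessLife_Ici hα hc.le hcz hνmean hy
    rw [← hτB] at hsum
    obtain ⟨hτ_fin, hexcess_fin⟩ := ENNReal.add_ne_top.mp (hsum ▸ ENNReal.ofReal_ne_top)
    have hsum_real := congrArg ENNReal.toReal hsum
    rw [ENNReal.toReal_add hτ_fin hexcess_fin, ENNReal.toReal_mul,
      ENNReal.toReal_ofReal (sub_nonneg.mpr hcz.le),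
      ENNReal.toReal_ofReal (hc.trans hcz).le] at hsum_real
    linarith
  · rw [hτB, lintegral_min_eq_excessLife_Ici α hc hcz.le ν hy.le, ENNReal.toReal_mul,
      ENNReal.toReal_ofReal hc.le]

/-- linear deadlines `ϑ = ν ∘ (x ↦ (x,cx))⁻¹`, case `z > c`:
`ϑ_e^z([0,∞)×[y,∞)) = z + (c−z) ν_e([y/(c−z),∞))` for `y ≤ 0`, and
`= c ν_e([y/c,∞))` for `y > 0`. -/
theorem stmt_14 (α : ℝ) (hα : 0 < α) (c : ℝ) (hc : 0 < c)
    (ν : Measure ℝ) [IsProbabilityMeasure ν]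
    (hνsupp : ν {x : ℝ | x < 0} = 0) (hνatom : ν ({0} : Set ℝ) = 0)
    (hνmean : ∫⁻ x, ENNReal.ofReal x ∂ν = ENNReal.ofReal α⁻¹)
    (ϑ : Measure (ℝ × ℝ)) (hϑ : ϑ = ν.map (fun x : ℝ => (x, c * x)))
    (z : ℝ) (hcz : c < z) (τ : Measure (ℝ × ℝ)) [IsFiniteMeasure τ]
    (hτsupp : τ {p : ℝ × ℝ | p.1 < 0} = 0)
    (hτ : ∀ B : Set (ℝ × ℝ), MeasurableSet B → B ⊆ Hplus →
      τ B = ENNReal.ofReal α * ∫⁻ u in Ioi (0 : ℝ), ϑ (shiftSet B (u / z, u))) :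
    ∀ y : ℝ,
      (y ≤ 0 → (τ (Ici (0 : ℝ) ×ˢ Ici y)).toReal
          = z + (c - z) * (excessLife α ν (Ici (y / (c - z)))).toReal) ∧
      (0 < y → (τ (Ici (0 : ℝ) ×ˢ Ici y)).toReal
          = c * (excessLife α ν (Ici (y / c))).toReal) :=
  stmt_14_general α hα c hc ν hνmean ϑ hϑ z hcz τ hτ
end
end

section
/- Let K be a compact subset (in the topology of weak convergence) of the invariant manifold M_ϑ = {ϑ_e^z : z ≥ 0}. Then for every ε > 0 and every R > 0 there exists κ > 0 such that for all ξ ∈ K: ξ([x, x+κ] × ℝ) ≤ ε for every x ∈ [0, R], and ξ([0,∞) × [y, y+κ]) ≤ ε for every y ∈ [−R, R]. -/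
open MeasureTheory Set Filter Topology

noncomputable section

/-!
By the layer-cake formula, `ϑ_e^z` has total mass `α · z · ∫ x dϑ = z`, so on the weakly compact
set `S`, where the total mass is bounded, the parameter `z` is bounded by some `Z`. By Tonelli, the
mass `ϑ_e^z` gives to a strip of width `κ` is at most `α` times the Lebesgue measure of the set of
times `u` at which a fixed point lies in the strip shifted by `(u/z, u)`, i.e. at most `α z κ` for
vertical and `α κ` for horizontal strips; `κ = ε / (α (Z + 1))` works uniformly.
-/

open scoped ENNReal

lemma shiftSet_eq_preimage (B : Set (ℝ × ℝ)) (w : ℝ × ℝ) :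
    shiftSet B w = (· - w) ⁻¹' B := by
  ext p
  exact ⟨fun ⟨b, hb, hp⟩ => by simpa [← hp] using hb, fun h => ⟨p - w, h, sub_add_cancel p w⟩⟩

lemma lintegral_Ioi_measure_le_eq_lintegral_ofReal {X : Type*} [MeasurableSpace X]
    (μ : Measure X) {f : X → ℝ} (hf : AEMeasurable f μ) :
    ∫⁻ t in Ioi 0, μ {a | t ≤ f a} = ∫⁻ a, ENNReal.ofReal (f a) ∂μ := by
  calc ∫⁻ t in Ioi 0, μ {a | t ≤ f a} = ∫⁻ t in Ioi 0, μ {a | t ≤ max (f a) 0} :=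
        setLIntegral_congr_fun measurableSet_Ioi fun t (ht : 0 < t) => by
          simp only [le_max_iff, ht.not_ge, or_false]
    _ = ∫⁻ a, ENNReal.ofReal (max (f a) 0) ∂μ :=
        (lintegral_eq_lintegral_meas_le μ (ae_of_all _ fun a => le_max_right _ _)
          (hf.max aemeasurable_const)).symm
    _ = ∫⁻ a, ENNReal.ofReal (f a) ∂μ := by
        simp only [ENNReal.ofReal_max, ENNReal.ofReal_zero, max_eq_left zero_le]

lemma lintegral_Ioi_measure_window_le {X : Type*} [MeasurableSpace X] (μ : Measure X)
    [SFinite μ] {g : X → ℝ} (hg : Measurable g) (κ : ℝ) :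
    ∫⁻ u in Ioi 0, μ {p | g p ≤ u ∧ u ≤ g p + κ} ≤ ENNReal.ofReal κ * μ univ := by
  set E : Set (ℝ × X) := {q | g q.2 ≤ q.1 ∧ q.1 ≤ g q.2 + κ}
  have hE : MeasurableSet E :=
    (measurableSet_le (hg.comp measurable_snd) measurable_fst).inter
      (measurableSet_le measurable_fst ((hg.comp measurable_snd).add_const κ))
  calc ∫⁻ u in Ioi 0, μ {p | g p ≤ u ∧ u ≤ g p + κ}
      = ((volume.restrict (Ioi 0)).prod μ) E := (Measure.prod_apply hE).symm
    _ = ∫⁻ p, volume.restrict (Ioi 0) (Icc (g p) (g p + κ)) ∂μ := Measure.prod_apply_symm hE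
    _ ≤ ∫⁻ _, ENNReal.ofReal κ ∂μ := by
      refine lintegral_mono fun p => ?_
      calc volume.restrict (Ioi 0) (Icc (g p) (g p + κ)) ≤ volume (Icc (g p) (g p + κ)) :=
            Measure.restrict_apply_le _ _
        _ = ENNReal.ofReal κ := by rw [Real.volume_Icc, add_sub_cancel_left]
    _ = ENNReal.ofReal κ * μ univ := lintegral_const _

/-- The value `ϑ_e^z(B)`, for `z > 0`: at `z = 0` the junk value `u / 0 = 0` makes this differ
from the paper's `ϑ_e^0 = 0`. -/
def thetaE (α : ℝ) (ϑ : Measure (ℝ × ℝ)) (z : ℝ) (B : Set (ℝ × ℝ)) : ℝ≥0∞ :=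
  ENNReal.ofReal α * ∫⁻ u in Ioi (0 : ℝ), ϑ (shiftSet B (u / z, u))

section thetaE

variable {α z : ℝ} {ϑ : Measure (ℝ × ℝ)}

lemma thetaE_Hplus (hα : 0 < α) (hz : 0 < z)
    (hmean : ∫⁻ p, ENNReal.ofReal p.1 ∂ϑ = ENNReal.ofReal α⁻¹) :
    thetaE α ϑ z Hplus = ENNReal.ofReal z := by
  have hshift : ∀ u, shiftSet Hplus (u / z, u) = {p | u ≤ z * p.1} := fun u => by
    ext p
    simp [shiftSet_eq_preimage, Hplus, div_le_iff₀' hz]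
  simp_rw [thetaE, hshift]
  rw [lintegral_Ioi_measure_le_eq_lintegral_ofReal ϑ (measurable_fst.const_mul z).aemeasurable]
  simp_rw [ENNReal.ofReal_mul hz.le]
  rw [lintegral_const_mul _ measurable_fst.ennreal_ofReal, hmean, mul_left_comm,
    ← ENNReal.ofReal_mul hα.le, mul_inv_cancel₀ hα.ne', ENNReal.ofReal_one, mul_one]

variable [IsProbabilityMeasure ϑ]

lemma thetaE_vertical_strip_le (hα : 0 ≤ α) (hz : 0 < z) (x κ : ℝ) :
    thetaE α ϑ z (Icc x (x + κ) ×ˢ univ) ≤ ENNReal.ofReal (α * (z * κ)) := by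
  have hshift : ∀ u, shiftSet (Icc x (x + κ) ×ˢ univ) (u / z, u)
      = {p | z * (p.1 - x - κ) ≤ u ∧ u ≤ z * (p.1 - x - κ) + z * κ} := fun u => by
    ext p
    simp only [shiftSet_eq_preimage, mem_preimage, mem_prod, mem_Icc, mem_univ, and_true,
      Prod.fst_sub, mem_ofPred_eq]
    rw [show z * (p.1 - x - κ) + z * κ = z * (p.1 - x) by ring, ← le_div_iff₀' hz,
      ← div_le_iff₀' hz]
    constructor <;> rintro ⟨h₁, h₂⟩ <;> constructor <;> linarith
  calc thetaE α ϑ z (Icc x (x + κ) ×ˢ univ)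
      = ENNReal.ofReal α * ∫⁻ u in Ioi 0,
          ϑ {p | z * (p.1 - x - κ) ≤ u ∧ u ≤ z * (p.1 - x - κ) + z * κ} := by
        simp_rw [thetaE, hshift]
    _ ≤ ENNReal.ofReal α * ENNReal.ofReal (z * κ) := by
        grw [lintegral_Ioi_measure_window_le ϑ (measurable_fst.sub_const x |>.sub_const κ
          |>.const_mul z), measure_univ, mul_one]
    _ = ENNReal.ofReal (α * (z * κ)) := (ENNReal.ofReal_mul hα).symm

lemma thetaE_horizontal_strip_le (hα : 0 ≤ α) (y κ : ℝ) :
    thetaE α ϑ z (Ici 0 ×ˢ Icc y (y + κ)) ≤ ENNReal.ofReal (α * κ) := by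
  have hshift : ∀ u, shiftSet (Ici 0 ×ˢ Icc y (y + κ)) (u / z, u)
      ⊆ {p | p.2 - y - κ ≤ u ∧ u ≤ p.2 - y - κ + κ} := fun u p hp => by
    simp only [shiftSet_eq_preimage, mem_preimage, mem_prod, mem_Icc, Prod.snd_sub] at hp
    constructor <;> linarith [hp.2.1, hp.2.2]
  calc thetaE α ϑ z (Ici 0 ×ˢ Icc y (y + κ))
      ≤ ENNReal.ofReal α * ∫⁻ u in Ioi 0, ϑ {p | p.2 - y - κ ≤ u ∧ u ≤ p.2 - y - κ + κ} := by
        grw [thetaE, lintegral_mono fun u => measure_mono (hshift u)]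
    _ ≤ ENNReal.ofReal α * ENNReal.ofReal κ := by
        grw [lintegral_Ioi_measure_window_le ϑ (measurable_snd.sub_const y |>.sub_const κ),
          measure_univ, mul_one]
    _ = ENNReal.ofReal (α * κ) := (ENNReal.ofReal_mul hα).symm

end thetaE

theorem stmt_17_general (α : ℝ) (hα : 0 < α) (ϑ : Measure (ℝ × ℝ)) [IsProbabilityMeasure ϑ]
    (hϑmean : ∫⁻ p, ENNReal.ofReal p.1 ∂ϑ = ENNReal.ofReal α⁻¹)
    (τ : ℝ → FiniteMeasure (ℝ × ℝ))
    (hτ0 : (τ 0 : Measure (ℝ × ℝ)) = 0)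
    (hτ : ∀ z : ℝ, 0 < z → ∀ B : Set (ℝ × ℝ), MeasurableSet B → B ⊆ Hplus →
      (τ z : Measure (ℝ × ℝ)) B
        = ENNReal.ofReal α * ∫⁻ u in Ioi (0 : ℝ), ϑ (shiftSet B (u / z, u)))
    (S : Set (FiniteMeasure (ℝ × ℝ))) (hScomp : IsCompact S)
    (hSsub : S ⊆ {μ | ∃ z : ℝ, 0 ≤ z ∧ μ = τ z}) :
    ∀ ε : ℝ, 0 < ε → ∀ R : ℝ, 0 < R → ∃ κ : ℝ, 0 < κ ∧ ∀ μ ∈ S,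
      (∀ x : ℝ, x ∈ Icc (0 : ℝ) R →
        (μ : Measure (ℝ × ℝ)) (Icc x (x + κ) ×ˢ (univ : Set ℝ)) ≤ ENNReal.ofReal ε) ∧
      (∀ y : ℝ, y ∈ Icc (-R) R →
        (μ : Measure (ℝ × ℝ)) (Ici (0 : ℝ) ×ˢ Icc y (y + κ)) ≤ ENNReal.ofReal ε) := by
  intro ε hε R _
  obtain ⟨Z, hZ⟩ := hScomp.bddAbove_image FiniteMeasure.continuous_mass.continuousOn
  have hZ0 : (0 : ℝ) ≤ Z := Z.2
  set κ := ε / (α * (Z + 1))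
  have hκ : 0 < κ := by positivity
  have hακ : α * ((Z + 1) * κ) = ε := by
    simp only [κ]
    field_simp
  refine ⟨κ, hκ, fun μ hμ => ?_⟩
  obtain ⟨z, hz0, rfl⟩ := hSsub hμ
  rcases hz0.eq_or_lt with rfl | hz
  · simp [hτ0]
  have hzZ : ENNReal.ofReal z ≤ Z := calc
    ENNReal.ofReal z = thetaE α ϑ z Hplus := (thetaE_Hplus hα hz hϑmean).symm
    _ = (τ z : Measure (ℝ × ℝ)) Hplus :=
      (hτ z hz _ (measurableSet_le measurable_const measurable_fst) subset_rfl).symm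
    _ ≤ (τ z).mass := (τ z).ennreal_mass ▸ measure_mono (subset_univ _)
    _ ≤ Z := by exact_mod_cast hZ ⟨_, hμ, rfl⟩
  rw [← ENNReal.ofReal_coe_nnreal, ENNReal.ofReal_le_ofReal_iff hZ0] at hzZ
  constructor
  · intro x hx
    calc (τ z : Measure (ℝ × ℝ)) (Icc x (x + κ) ×ˢ univ)
          = thetaE α ϑ z (Icc x (x + κ) ×ˢ univ) :=
          hτ z hz _ (measurableSet_Icc.prod .univ) fun p hp => hx.1.trans hp.1.1
      _ ≤ ENNReal.ofReal (α * (z * κ)) := thetaE_vertical_strip_le hα.le hz x κ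
      _ ≤ ENNReal.ofReal ε := by rw [← hακ]; gcongr; linarith
  · intro y _
    calc (τ z : Measure (ℝ × ℝ)) (Ici 0 ×ˢ Icc y (y + κ))
          = thetaE α ϑ z (Ici 0 ×ˢ Icc y (y + κ)) :=
          hτ z hz _ (measurableSet_Ici.prod measurableSet_Icc) fun p hp => hp.1
      _ ≤ ENNReal.ofReal (α * κ) := thetaE_horizontal_strip_le hα.le y κ
      _ ≤ ENNReal.ofReal ε := by rw [← hακ]; gcongr; nlinarith

/-- on a weakly compact subset `S` of the invariant manifold
`M_ϑ = {ϑ_e^z : z ≥ 0}`, thin vertical and horizontal strips (within a window of size `R`)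
have uniformly small mass. -/
theorem stmt_17 (α : ℝ) (hα : 0 < α) (ϑ : Measure (ℝ × ℝ)) [IsProbabilityMeasure ϑ]
    (hϑsupp : ϑ {p : ℝ × ℝ | p.1 < 0} = 0)
    (hϑ0 : ϑ {p : ℝ × ℝ | p.1 = 0} = 0)
    (hϑmean : ∫⁻ p, ENNReal.ofReal p.1 ∂ϑ = ENNReal.ofReal α⁻¹)
    (τ : ℝ → FiniteMeasure (ℝ × ℝ))
    (hτ0 : (τ 0 : Measure (ℝ × ℝ)) = 0)
    (hτsupp : ∀ z : ℝ, 0 < z → (τ z : Measure (ℝ × ℝ)) {p : ℝ × ℝ | p.1 < 0} = 0)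
    (hτ : ∀ z : ℝ, 0 < z → ∀ B : Set (ℝ × ℝ), MeasurableSet B → B ⊆ Hplus →
      (τ z : Measure (ℝ × ℝ)) B
        = ENNReal.ofReal α * ∫⁻ u in Ioi (0 : ℝ), ϑ (shiftSet B (u / z, u)))
    (S : Set (FiniteMeasure (ℝ × ℝ))) (hScomp : IsCompact S)
    (hSsub : S ⊆ {μ | ∃ z : ℝ, 0 ≤ z ∧ μ = τ z}) :
    ∀ ε : ℝ, 0 < ε → ∀ R : ℝ, 0 < R → ∃ κ : ℝ, 0 < κ ∧ ∀ μ ∈ S,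
      (∀ x : ℝ, x ∈ Icc (0 : ℝ) R →
        (μ : Measure (ℝ × ℝ)) (Icc x (x + κ) ×ˢ (univ : Set ℝ)) ≤ ENNReal.ofReal ε) ∧
      (∀ y : ℝ, y ∈ Icc (-R) R →
        (μ : Measure (ℝ × ℝ)) (Ici (0 : ℝ) ×ˢ Icc y (y + κ)) ≤ ENNReal.ofReal ε) :=
  stmt_17_general α hα ϑ hϑmean τ hτ0 hτ S hScomp hSsub
end
end
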